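/- Let d2, h, q > 0, let 0 ≤ x1 < L, and let 0 < a < a'. Suppose w1 is a solution of the upstream toxicant boundary value problem on [x1, L] with advection rate a and w2 is a solution with advection rate a' (all other parameters d2, h, q equal). Then w2(x) < w1(x) for every x ∈ (x1, L). (The solution of the upstream problem is strictly decreasing with respect to the advection rate a2.) -/

import Mathlib

open Set Filter Real Topology



/-- `w` is a solution of the upstream toxicant boundary value problem with
parameters `d2, a2, h, q` on the interval `[x1, L]`. -/
def IsUpstreamSolution (d2 a2 h q x1 L : ℝ) (w : ℝ → ℝ) : Prop :=
  ContDiff ℝ 2 w ∧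
  (∀ x ∈ Set.Icc x1 L,
      d2 * deriv (deriv w) x - a2 * deriv w x + h - q * w x = 0) ∧
  d2 * deriv w x1 - a2 * w x1 = 0 ∧ deriv w L = 0



/-- Slope eventually negative when derivative is negative. -/
lemma slope_ev_neg {f : ℝ → ℝ} {x0 : ℝ} (hf : DifferentiableAt ℝ f x0)
    (hneg : deriv f x0 < 0) : ∀ᶠ x in 𝓝[≠] x0, slope f x0 x < 0 :=
  (hasDerivAt_iff_tendsto_slope.mp hf.hasDerivAt).eventually_lt_const hneg

lemma deriv_neg_eventually_right {f : ℝ → ℝ} {x0 : ℝ} (hf : DifferentiableAt ℝ f x0)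
    (hneg : deriv f x0 < 0) : ∀ᶠ x in 𝓝[>] x0, f x < f x0 := by
  have h := (slope_ev_neg hf hneg).filter_mono
    (nhdsWithin_mono x0 (fun x hx => ne_of_gt hx : Ioi x0 ⊆ {x0}ᶜ))
  filter_upwards [h, self_mem_nhdsWithin] with x hx hx'
  rw [slope_def_field] at hx
  have hx0 : 0 < x - x0 := sub_pos.mpr hx'
  have := mul_neg_of_neg_of_pos hx hx0
  rw [div_mul_cancel₀] at this
  · linarith
  · exact ne_of_gt hx0

lemma deriv_pos_eventually_left {f : ℝ → ℝ} {x0 : ℝ} (hf : DifferentiableAt ℝ f x0)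
    (hneg : deriv f x0 < 0) : ∀ᶠ x in 𝓝[<] x0, f x0 < f x := by
  have h := (slope_ev_neg hf hneg).filter_mono
    (nhdsWithin_mono x0 (fun x hx => ne_of_lt hx : Iio x0 ⊆ {x0}ᶜ))
  filter_upwards [h, self_mem_nhdsWithin] with x hx hx'
  rw [slope_def_field] at hx
  have hx0 : x - x0 < 0 := sub_neg.mpr hx'
  have := mul_pos_of_neg_of_neg hx hx0
  rw [div_mul_cancel₀] at this
  · linarith
  · exact ne_of_lt hx0

lemma deriv_nonneg_of_isMinOn_left {f : ℝ → ℝ} {A B : ℝ} (hAB : A < B)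
    (hf : DifferentiableAt ℝ f A) (hmin : ∀ x ∈ Set.Icc A B, f A ≤ f x) :
    0 ≤ deriv f A := by
  have ht : Tendsto (slope f A) (𝓝[>] A) (𝓝 (deriv f A)) :=
    (hasDerivAt_iff_tendsto_slope.mp hf.hasDerivAt).mono_left
      (nhdsWithin_mono A (fun x hx => ne_of_gt hx : Ioi A ⊆ {A}ᶜ))
  refine ge_of_tendsto ht ?_
  filter_upwards [Ioo_mem_nhdsGT hAB] with x hx
  rw [slope_def_field]
  have h1 : f A ≤ f x := hmin x (Ioo_subset_Icc_self hx)
  have h2 : 0 < x - A := sub_pos.mpr hx.1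
  exact div_nonneg (by linarith) h2.le

/-- If `f' x0 = 0` and `f'' x0 < 0` with `x0 < B`, some point to the right has smaller value. -/
lemma second_test_right {f : ℝ → ℝ} {x0 B : ℝ} (hB : x0 < B)
    (hf : Differentiable ℝ f) (hf' : DifferentiableAt ℝ (deriv f) x0)
    (h0 : deriv f x0 = 0) (hneg : deriv (deriv f) x0 < 0) :
    ∃ x ∈ Set.Ioo x0 B, f x < f x0 := by
  have h := (slope_ev_neg hf' hneg).filter_mono
    (nhdsWithin_mono x0 (fun x hx => ne_of_gt hx : Ioi x0 ⊆ {x0}ᶜ))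
  -- on a right neighbourhood, deriv f < 0
  have h2 : ∀ᶠ x in 𝓝[>] x0, deriv f x < 0 := by
    filter_upwards [h, self_mem_nhdsWithin] with x hx hx'
    rw [slope_def_field, h0, sub_zero] at hx
    have hx0 : 0 < x - x0 := sub_pos.mpr hx'
    have := mul_neg_of_neg_of_pos hx hx0
    rwa [div_mul_cancel₀ _ (ne_of_gt hx0)] at this
  replace h2 := mem_nhdsGT_iff_exists_Ioo_subset.mp h2
  obtain ⟨u, hu, hsub⟩ := h2
  set b := min u B with hb
  have hx0b : x0 < b := lt_min hu hB
  have hanti : StrictAntiOn f (Icc x0 b) := by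
    refine strictAntiOn_of_deriv_neg (convex_Icc _ _) hf.continuous.continuousOn ?_
    intro x hx
    rw [interior_Icc] at hx
    exact hsub ⟨hx.1, lt_of_lt_of_le hx.2 (min_le_left _ _)⟩
  refine ⟨(x0 + b) / 2, ⟨by linarith, ?_⟩, ?_⟩
  · have hbm : (x0 + b) / 2 < b := by linarith
    exact lt_of_lt_of_le hbm (min_le_right u B)
  · exact hanti (left_mem_Icc.mpr hx0b.le) ⟨by linarith, by linarith⟩ (by linarith)

/-- If `f' x0 = 0` and `f'' x0 < 0` with `B < x0`, some point to the left has smaller value. -/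
lemma second_test_left {f : ℝ → ℝ} {x0 B : ℝ} (hB : B < x0)
    (hf : Differentiable ℝ f) (hf' : DifferentiableAt ℝ (deriv f) x0)
    (h0 : deriv f x0 = 0) (hneg : deriv (deriv f) x0 < 0) :
    ∃ x ∈ Set.Ioo B x0, f x < f x0 := by
  have h := (slope_ev_neg hf' hneg).filter_mono
    (nhdsWithin_mono x0 (fun x hx => ne_of_lt hx : Iio x0 ⊆ {x0}ᶜ))
  have h2 : ∀ᶠ x in 𝓝[<] x0, 0 < deriv f x := by
    filter_upwards [h, self_mem_nhdsWithin] with x hx hx'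
    rw [slope_def_field, h0, sub_zero] at hx
    have hx0 : x - x0 < 0 := sub_neg.mpr hx'
    have := mul_pos_of_neg_of_neg hx hx0
    rwa [div_mul_cancel₀ _ (ne_of_lt hx0)] at this
  replace h2 := mem_nhdsLT_iff_exists_Ioo_subset.mp h2
  obtain ⟨u, hu, hsub⟩ := h2
  set b := max u B with hb
  have hx0b : b < x0 := max_lt hu hB
  have hmono : StrictMonoOn f (Icc b x0) := by
    refine strictMonoOn_of_deriv_pos (convex_Icc _ _) hf.continuous.continuousOn ?_
    intro x hx
    rw [interior_Icc] at hx
    exact hsub ⟨lt_of_le_of_lt (le_max_left _ _) hx.1, hx.2⟩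
  refine ⟨(b + x0) / 2, ⟨?_, by linarith⟩, ?_⟩
  · have hbm : b < (b + x0) / 2 := by linarith
    exact lt_of_le_of_lt (le_max_right u B) hbm
  · exact hmono ⟨by linarith, by linarith⟩ (right_mem_Icc.mpr hx0b.le) (by linarith)

lemma upstream_reg {w : ℝ → ℝ} (hw : ContDiff ℝ 2 w) :
    Differentiable ℝ w ∧ Differentiable ℝ (deriv w) ∧ Continuous (deriv (deriv w)) := by
  have h2 : ContDiff ℝ ((1 : ℕ) + 1) w := by exact_mod_cast hw
  rw [contDiff_succ_iff_deriv] at h2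
  obtain ⟨h0, -, h1⟩ := h2
  rw [show ((1:ℕ) : WithTop ℕ∞) = (1 : WithTop ℕ∞) from rfl, contDiff_one_iff_deriv] at h1
  exact ⟨h0, h1.1, h1.2⟩

set_option maxHeartbeats 2000000 in
/-- Basic qualitative properties of an upstream solution: it stays below `h/q`,
its derivative is positive on `[x1, L)`, and it is positive at `x1`. -/
lemma upstream_basic {d2 a2 h q x1 L : ℝ} {w : ℝ → ℝ}
    (hd2 : 0 < d2) (hh : 0 < h) (hq : 0 < q) (hx1L : x1 < L) (ha2 : 0 < a2)
    (hw : IsUpstreamSolution d2 a2 h q x1 L w) :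
    (∀ x ∈ Set.Icc x1 L, q * w x < h) ∧ (∀ x ∈ Set.Ico x1 L, 0 < deriv w x) ∧ 0 < w x1 := by
  obtain ⟨hC2, hode, hrobin, hLd⟩ := hw
  obtain ⟨hdw, hdw', hcw''⟩ := upstream_reg hC2
  have hcw : Continuous w := hdw.continuous
  have hcw' : Continuous (deriv w) := hdw'.continuous
  have hw'at : ∀ x : ℝ, HasDerivAt w (deriv w x) x := fun x => (hdw x).hasDerivAt
  have hw''at : ∀ x : ℝ, HasDerivAt (deriv w) (deriv (deriv w) x) x := fun x => (hdw' x).hasDerivAt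
  have hode' : ∀ x ∈ Set.Icc x1 L,
      d2 * deriv (deriv w) x = a2 * deriv w x + q * w x - h := by
    intro x hx; have := hode x hx; linarith
  -- The energy function
  set E : ℝ → ℝ := fun y => d2 * (q * deriv w y)^2 - q * (q * w y - h)^2 with hEdef
  have hEd : ∀ x : ℝ, HasDerivAt E
      (d2 * (2 * (q * deriv w x) * (q * deriv (deriv w) x))
        - q * (2 * (q * w x - h) * (q * deriv w x))) x := by
    intro x
    have h1 : HasDerivAt (fun y => q * deriv w y) (q * deriv (deriv w) x) x :=
      (hw''at x).const_mul q
    have h2 : HasDerivAt (fun y => q * w y - h) (q * deriv w x) x :=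
      ((hw'at x).const_mul q).sub_const h
    have := ((h1.fun_pow 2).const_mul d2).fun_sub ((h2.fun_pow 2).const_mul q)
    refine this.congr_deriv ?_
    push_cast
    ring
  have hEcont : Continuous E := by
    apply Continuous.sub
    · exact continuous_const.mul ((continuous_const.mul hcw').pow 2)
    · exact continuous_const.mul (((continuous_const.mul hcw).sub continuous_const).pow 2)
  have hEmono : MonotoneOn E (Set.Icc x1 L) := by
    refine monotoneOn_of_deriv_nonneg (convex_Icc _ _) hEcont.continuousOn
      (fun x _ => (hEd x).differentiableAt.differentiableWithinAt) ?_
    intro x hx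
    rw [interior_Icc] at hx
    have hodex := hode' x (Ioo_subset_Icc_self hx)
    rw [(hEd x).deriv]
    have e : d2 * (2 * (q * deriv w x) * (q * deriv (deriv w) x))
        - q * (2 * (q * w x - h) * (q * deriv w x)) = 2 * a2 * q^2 * (deriv w x)^2 := by
      linear_combination (2 * q^2 * deriv w x) * hodex
    rw [e]; positivity
  have hEL : E L ≤ 0 := by
    show d2 * (q * deriv w L)^2 - q * (q * w L - h)^2 ≤ 0
    rw [hLd]
    nlinarith [sq_nonneg (q * w L - h)]
  have hEneg : ∀ x ∈ Set.Icc x1 L, E x ≤ 0 := fun x hx =>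
    le_trans (hEmono hx (right_mem_Icc.mpr hx1L.le) hx.2) hEL
  -- the solution never touches the level h/q
  have hnz : ∀ c ∈ Set.Icc x1 L, q * w c ≠ h := by
    rintro c hc hceq
    have hEc : d2 * (q * deriv w c)^2 - q * (q * w c - h)^2 ≤ 0 := hEneg c hc
    have hpc : deriv w c = 0 := by
      rw [hceq, sub_self] at hEc
      have h1 : (q * deriv w c)^2 ≤ 0 := by nlinarith [hEc]
      have h2 : q * deriv w c = 0 := sq_eq_zero_iff.mp (le_antisymm h1 (sq_nonneg _))
      rcases mul_eq_zero.mp h2 with h3 | h3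
      · exact absurd h3 (ne_of_gt hq)
      · exact h3
    -- Gronwall backwards to x1
    obtain ⟨C, hC⟩ : ∃ C : ℝ, d2 * C = d2 + q := ⟨(d2 + q)/d2, by field_simp⟩
    set G : ℝ → ℝ := fun y => (q * w y - h)^2 + (q * deriv w y)^2 with hGdef
    set H : ℝ → ℝ := fun y => Real.exp (y * C) * G y with hHdef
    have hGd : ∀ x : ℝ, HasDerivAt G
        (2 * (q * w x - h) * (q * deriv w x)
          + 2 * (q * deriv w x) * (q * deriv (deriv w) x)) x := by
      intro x
      have h1 : HasDerivAt (fun y => q * w y - h) (q * deriv w x) x :=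
        ((hw'at x).const_mul q).sub_const h
      have h2 : HasDerivAt (fun y => q * deriv w y) (q * deriv (deriv w) x) x :=
        (hw''at x).const_mul q
      have := (h1.fun_pow 2).fun_add (h2.fun_pow 2)
      refine this.congr_deriv ?_
      push_cast
      ring
    have hHd : ∀ x : ℝ, HasDerivAt H
        (Real.exp (x * C) * C * G x + Real.exp (x * C) *
          (2 * (q * w x - h) * (q * deriv w x)
            + 2 * (q * deriv w x) * (q * deriv (deriv w) x))) x := by
      intro x
      exact ((hasDerivAt_mul_const C).exp).mul (hGd x)
    have hGcont : Continuous G := by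
      apply Continuous.add
      · exact ((continuous_const.mul hcw).sub continuous_const).pow 2
      · exact (continuous_const.mul hcw').pow 2
    have hHcont : Continuous H :=
      ((continuous_id.mul continuous_const).rexp).mul hGcont
    have hHmono : MonotoneOn H (Set.Icc x1 c) := by
      refine monotoneOn_of_deriv_nonneg (convex_Icc _ _) hHcont.continuousOn
        (fun x _ => (hHd x).differentiableAt.differentiableWithinAt) ?_
      intro x hx
      rw [interior_Icc] at hx
      have hxI : x ∈ Set.Icc x1 L := ⟨hx.1.le, le_trans hx.2.le hc.2⟩
      have hodex := hode' x hxI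
      rw [(hHd x).deriv]
      have e : d2 * (Real.exp (x * C) * C * G x + Real.exp (x * C) *
          (2 * (q * w x - h) * (q * deriv w x)
            + 2 * (q * deriv w x) * (q * deriv (deriv w) x)))
          = Real.exp (x * C) * ((d2 + q) * ((q * w x - h) + q * deriv w x)^2
            + 2 * a2 * (q * deriv w x)^2) := by
        simp only [hGdef]
        linear_combination (Real.exp (x * C) * ((q * w x - h)^2 + (q * deriv w x)^2)) * hC
          + (Real.exp (x * C) * 2 * q * (q * deriv w x)) * hodex
      have h5 : 0 ≤ d2 * (Real.exp (x * C) * C * G x + Real.exp (x * C) *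
          (2 * (q * w x - h) * (q * deriv w x)
            + 2 * (q * deriv w x) * (q * deriv (deriv w) x))) := by
        rw [e]; positivity
      nlinarith [h5]
    have hHc : H c = 0 := by
      show Real.exp (c * C) * ((q * w c - h)^2 + (q * deriv w c)^2) = 0
      rw [hceq, hpc]
      ring
    have hHx1 : H x1 ≤ 0 := by
      have := hHmono (left_mem_Icc.mpr hc.1) (right_mem_Icc.mpr hc.1) hc.1
      rw [hHc] at this; exact this
    have hG1 : (q * w x1 - h)^2 + (q * deriv w x1)^2 ≤ 0 := by
      have hHx1' : Real.exp (x1 * C) * ((q * w x1 - h)^2 + (q * deriv w x1)^2) ≤ 0 := hHx1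
      nlinarith [Real.exp_pos (x1 * C), sq_nonneg (q * w x1 - h), sq_nonneg (q * deriv w x1)]
    have hsq1 : (q * w x1 - h)^2 = 0 :=
      le_antisymm (by nlinarith [sq_nonneg (q * deriv w x1)]) (sq_nonneg _)
    have hqw1 : q * w x1 = h := by
      have := sq_eq_zero_iff.mp hsq1; linarith
    have hp1 : deriv w x1 = 0 := by
      have hsq2 : (q * deriv w x1)^2 = 0 :=
        le_antisymm (by nlinarith [sq_nonneg (q * w x1 - h)]) (sq_nonneg _)
      have h2 : q * deriv w x1 = 0 := sq_eq_zero_iff.mp hsq2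
      rcases mul_eq_zero.mp h2 with h3 | h3
      · exact absurd h3 (ne_of_gt hq)
      · exact h3
    -- contradiction with the Robin boundary condition
    rw [hp1] at hrobin
    have hwx1 : w x1 = 0 := by
      have : a2 * w x1 = 0 := by linarith
      rcases mul_eq_zero.mp this with h3 | h3
      · exact absurd h3 (ne_of_gt ha2)
      · exact h3
    rw [hwx1] at hqw1
    simp at hqw1
    linarith
  -- the sign dichotomy
  obtain ⟨k, hk⟩ : ∃ k : ℝ, d2 * k = -a2 := ⟨-a2/d2, by field_simp⟩
  set F : ℝ → ℝ := fun y => Real.exp (y * k) * (d2 * deriv w y) with hFdef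
  have hFd : ∀ x : ℝ, HasDerivAt F
      (Real.exp (x * k) * k * (d2 * deriv w x)
        + Real.exp (x * k) * (d2 * deriv (deriv w) x)) x := by
    intro x
    exact ((hasDerivAt_mul_const k).exp).mul ((hw''at x).const_mul d2)
  have hFcont : Continuous F :=
    ((continuous_id.mul continuous_const).rexp).mul (continuous_const.mul hcw')
  have hFderiv_eq : ∀ x ∈ Set.Ioo x1 L, deriv F x = Real.exp (x * k) * (q * w x - h) := by
    intro x hx
    have hodex := hode' x (Ioo_subset_Icc_self hx)
    rw [(hFd x).deriv]
    have hd2' : d2 ≠ 0 := ne_of_gt hd2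
    have : d2 * (Real.exp (x * k) * k * (d2 * deriv w x)
        + Real.exp (x * k) * (d2 * deriv (deriv w) x))
        = d2 * (Real.exp (x * k) * (q * w x - h)) := by
      linear_combination (Real.exp (x * k) * d2 * deriv w x) * hk
        + (Real.exp (x * k) * d2) * hodex
    exact mul_left_cancel₀ hd2' this
  have hFL : F L = 0 := by
    show Real.exp (L * k) * (d2 * deriv w L) = 0
    rw [hLd]; ring
  -- main claim: q * w < h on the whole interval
  have hlt : ∀ x ∈ Set.Icc x1 L, q * w x < h := by
    by_contra hcon
    push_neg at hcon
    obtain ⟨x0, hx0, hge⟩ := hcon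
    have hgt : h < q * w x0 := lt_of_le_of_ne hge (fun heq => hnz x0 hx0 heq.symm)
    have hall : ∀ x ∈ Set.Icc x1 L, h < q * w x := by
      intro y hy
      rcases lt_or_ge h (q * w y) with h1 | h1
      · exact h1
      have hylt : q * w y < h := lt_of_le_of_ne h1 (hnz y hy)
      -- IVT gives a point where q * w = h
      have hsub : Set.uIcc y x0 ⊆ Set.Icc x1 L := Set.uIcc_subset_Icc hy hx0
      have hctu : ContinuousOn (fun z => q * w z) (Set.uIcc y x0) :=
        (continuous_const.mul hcw).continuousOn
      have hmem : h ∈ Set.uIcc (q * w y) (q * w x0) :=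
        Set.mem_uIcc.mpr (Or.inl ⟨hylt.le, hgt.le⟩)
      obtain ⟨c, hcmem, hceq⟩ := intermediate_value_uIcc hctu hmem
      exact absurd hceq (hnz c (hsub hcmem))
    -- then F is strictly increasing, so F x1 < F L = 0
    have hFmono : StrictMonoOn F (Set.Icc x1 L) := by
      refine strictMonoOn_of_deriv_pos (convex_Icc _ _) hFcont.continuousOn ?_
      intro x hx
      rw [interior_Icc] at hx
      rw [hFderiv_eq x hx]
      have := hall x (Ioo_subset_Icc_self hx)
      have := Real.exp_pos (x * k)
      nlinarith
    have hlt1 : F x1 < 0 := by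
      have := hFmono (left_mem_Icc.mpr hx1L.le) (right_mem_Icc.mpr hx1L.le) hx1L
      rw [hFL] at this; exact this
    have hdx1 : d2 * deriv w x1 < 0 := by
      have hFx1 : Real.exp (x1 * k) * (d2 * deriv w x1) < 0 := hlt1
      nlinarith [Real.exp_pos (x1 * k)]
    -- but Robin: d2 * w'(x1) = a2 * w x1 > 0
    have hwx1pos : 0 < w x1 := by
      have h1 := hall x1 (left_mem_Icc.mpr hx1L.le)
      nlinarith
    nlinarith
  -- derivative positive on [x1, L)
  have hderiv_pos : ∀ x ∈ Set.Ico x1 L, 0 < deriv w x := by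
    have hFanti : StrictAntiOn F (Set.Icc x1 L) := by
      refine strictAntiOn_of_deriv_neg (convex_Icc _ _) hFcont.continuousOn ?_
      intro x hx
      rw [interior_Icc] at hx
      rw [hFderiv_eq x hx]
      have := hlt x (Ioo_subset_Icc_self hx)
      have := Real.exp_pos (x * k)
      nlinarith
    intro x hx
    have hFx : F L < F x := hFanti ⟨hx.1, hx.2.le⟩ (right_mem_Icc.mpr hx1L.le) hx.2
    rw [hFL] at hFx
    have hFx' : 0 < Real.exp (x * k) * (d2 * deriv w x) := hFx
    have h6 : 0 < d2 * deriv w x := by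
      by_contra h7
      push_neg at h7
      nlinarith [Real.exp_pos (x * k)]
    nlinarith [h6]
  refine ⟨hlt, hderiv_pos, ?_⟩
  have h1 := hderiv_pos x1 (left_mem_Ico.mpr hx1L)
  nlinarith

set_option maxHeartbeats 1000000 in
/-- the solution of the upstream problem is strictly decreasing
with respect to the advection rate `a2`. -/
theorem upstream_antitone_in_a2
    (d2 h q x1 L a a' : ℝ) (w1 w2 : ℝ → ℝ)
    (hd2 : 0 < d2) (hh : 0 < h) (hq : 0 < q)
    (hx1 : 0 ≤ x1) (hx1L : x1 < L)
    (ha : 0 < a) (haa' : a < a')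
    (hw1 : IsUpstreamSolution d2 a h q x1 L w1)
    (hw2 : IsUpstreamSolution d2 a' h q x1 L w2) :
    ∀ x ∈ Set.Ioo x1 L, w2 x < w1 x := by
  obtain ⟨-, hdpos2, hwx2pos⟩ :=
    upstream_basic hd2 hh hq hx1L (lt_trans ha haa') hw2
  obtain ⟨hdw1, hdw1', hcw1''⟩ := upstream_reg hw1.1
  obtain ⟨hdw2, hdw2', hcw2''⟩ := upstream_reg hw2.1
  set v : ℝ → ℝ := fun x => w1 x - w2 x with hvdef
  have hdv : Differentiable ℝ v := hdw1.sub hdw2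
  have hv' : ∀ x : ℝ, deriv v x = deriv w1 x - deriv w2 x := fun x =>
    deriv_sub (hdw1 x) (hdw2 x)
  have hv'fun : deriv v = fun x => deriv w1 x - deriv w2 x := funext hv'
  have hdv' : Differentiable ℝ (deriv v) := by rw [hv'fun]; exact hdw1'.sub hdw2'
  have hv'' : ∀ x : ℝ, deriv (deriv v) x = deriv (deriv w1) x - deriv (deriv w2) x := by
    intro x; rw [hv'fun]; exact deriv_sub (hdw1' x) (hdw2' x)
  have hodev : ∀ x ∈ Set.Icc x1 L,
      d2 * deriv (deriv v) x = a * deriv v x + q * v x - (a' - a) * deriv w2 x := by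
    intro x hx
    have h1 := hw1.2.1 x hx
    have h2 := hw2.2.1 x hx
    rw [hv'' x, hv' x]
    simp only [hvdef]
    ring_nf
    ring_nf at h1 h2
    linarith
  have hrv : d2 * deriv v x1 = a * v x1 - (a' - a) * w2 x1 := by
    have h1 := hw1.2.2.1
    have h2 := hw2.2.2.1
    rw [hv' x1]
    simp only [hvdef]
    linarith
  have hvL : deriv v L = 0 := by rw [hv' L, hw1.2.2.2, hw2.2.2.2]; ring
  have hw2L : deriv w2 L = 0 := hw2.2.2.2
  -- interior minimum points of v have positive value
  have hinterior : ∀ y ∈ Set.Ioo x1 L, IsMinOn v (Set.Icc x1 L) y → 0 < v y := by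
    intro y hy hmin
    by_contra hneg
    push_neg at hneg
    have hloc : IsLocalMin v y := hmin.isLocalMin (Icc_mem_nhds hy.1 hy.2)
    have hdy : deriv v y = 0 := hloc.deriv_eq_zero
    have hodeY := hodev y (Set.Ioo_subset_Icc_self hy)
    rw [hdy] at hodeY
    have hd2w2 := hdpos2 y ⟨hy.1.le, hy.2⟩
    have hvy'' : deriv (deriv v) y < 0 := by
      by_contra h7
      push_neg at h7
      nlinarith [mul_pos (sub_pos.mpr haa') hd2w2, mul_nonneg hq.le (neg_nonneg.mpr hneg),
        mul_nonneg hd2.le h7]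
    obtain ⟨z, hz, hltz⟩ := second_test_right hy.2 hdv (hdv' y) hdy hvy''
    have : v y ≤ v z := hmin ⟨le_trans hy.1.le hz.1.le, hz.2.le⟩
    linarith
  -- minimum at L has nonnegative value
  have hAtL : IsMinOn v (Set.Icc x1 L) L → 0 ≤ v L := by
    intro hmin
    by_contra hneg
    push_neg at hneg
    have hodeL := hodev L (Set.right_mem_Icc.mpr hx1L.le)
    rw [hvL, hw2L] at hodeL
    have hv''L : deriv (deriv v) L < 0 := by
      by_contra h7
      push_neg at h7
      nlinarith [mul_nonneg hd2.le h7, mul_pos hq (neg_pos.mpr hneg)]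
    obtain ⟨z, hz, hltz⟩ := second_test_left hx1L hdv (hdv' L) hvL hv''L
    have : v L ≤ v z := hmin ⟨hz.1.le, hz.2.le⟩
    linarith
  -- minimum at x1 has positive value
  have hAtx1 : IsMinOn v (Set.Icc x1 L) x1 → 0 < v x1 := by
    intro hmin
    by_contra hneg
    push_neg at hneg
    have h0 : 0 ≤ deriv v x1 :=
      deriv_nonneg_of_isMinOn_left hx1L (hdv x1) (fun x hx => hmin hx)
    nlinarith [mul_pos (sub_pos.mpr haa') hwx2pos, mul_nonneg ha.le (neg_nonneg.mpr hneg),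
      mul_nonneg hd2.le h0]
  -- assemble
  obtain ⟨x0, hx0mem, hx0min⟩ := isCompact_Icc.exists_isMinOn
    (Set.nonempty_Icc.mpr hx1L.le) hdv.continuous.continuousOn
  intro x hx
  have hxI : x ∈ Set.Icc x1 L := Set.Ioo_subset_Icc_self hx
  have hgoal : 0 < v x → w2 x < w1 x := by
    intro hpos
    simp only [hvdef] at hpos
    linarith
  apply hgoal
  rcases eq_or_lt_of_le hx0mem.1 with he1 | hgt1
  · have := hAtx1 (he1 ▸ hx0min)
    have h2 : v x0 ≤ v x := hx0min hxI
    rw [← he1] at h2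
    linarith
  rcases eq_or_lt_of_le hx0mem.2 with he2 | hlt2
  · -- minimum at L
    have hmin0 : 0 ≤ v L := hAtL (he2 ▸ hx0min)
    by_contra hc
    push_neg at hc
    have hminx : IsMinOn v (Set.Icc x1 L) x := by
      intro y hy
      have h3 : v x0 ≤ v y := hx0min hy
      have h4 : v x0 = v L := by rw [he2]
      show v x ≤ v y
      linarith
    have := hinterior x hx hminx
    linarith
  · have := hinterior x0 ⟨hgt1, hlt2⟩ hx0min
    have h2 : v x0 ≤ v x := hx0min hxI
    linarith
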